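/- Let G = (S, M_e, M_s, ρ) be a game structure, let d ⊆ S be a set of target states, and let (base, step, conc) be a semantic acceleration lemma over S such that base ⊆ d and such that for every s ∈ conc with s ∉ d we have s ∈ Attr_Sys(d ∪ {s' ∈ S | (s, s') ∈ step}). Then conc ⊆ Attr_Sys(d). -/

import Mathlib

/-- A two-player game structure: states `S`, environment moves `Me`, system moves `Ms`,
and a transition relation such that every state has a successor and the two players'
moves uniquely determine the successor. -/
structure GameStructure (S : Type*) (Me : Type*) (Ms : Type*) where
  rel : S → Me → Ms → S → Prop
  exists_succ : ∀ s : S, ∃ (me : Me) (ms : Ms) (s' : S), rel s me ms s'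
  deterministic : ∀ (s : S) (me : Me) (ms : Ms) (s₁ s₂ : S),
    rel s me ms s₁ → rel s me ms s₂ → s₁ = s₂

variable {S Me Ms : Type*}

/-- The environment moves enabled in a state. -/
def enabledE (G : GameStructure S Me Ms) (s : S) : Set Me :=
  {me | ∃ (ms : Ms) (s' : S), G.rel s me ms s'}

/-- The system moves enabled in a state after a given environment move. -/
def enabledS (G : GameStructure S Me Ms) (s : S) (me : Me) : Set Ms :=
  {ms | ∃ s' : S, G.rel s me ms s'}

/-- A strategy for the system player: it maps a nonempty finite sequence of states,
given as the pair of its strict prefix `h = (s₀, …, s_{n-1})` and its last state `s = sₙ`,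
together with an environment move, to a system move; on enabled environment moves it
must choose an enabled system move. -/
structure SysStrategy (G : GameStructure S Me Ms) where
  act : List S → S → Me → Ms
  act_enabled : ∀ (h : List S) (s : S) (me : Me),
    me ∈ enabledE G s → act h s me ∈ enabledS G s me

/-- A strategy for the environment player: it maps a nonempty finite sequence of states,
given as the pair of its strict prefix `h = (s₀, …, s_{n-1})` and its last state `s = sₙ`,
to an enabled environment move. -/
structure EnvStrategy (G : GameStructure S Me Ms) where
  act : List S → S → Me
  act_enabled : ∀ (h : List S) (s : S), act h s ∈ enabledE G s

/-- `π` is a play consistent with the system strategy `σ`: at every step `n` there is an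
enabled environment move `me` such that the transition from `π n` under `me` and the
move chosen by `σ` on the history `(π 0, …, π n)` leads to `π (n+1)`. -/
def SysPlay (G : GameStructure S Me Ms) (σ : SysStrategy G) (π : ℕ → S) : Prop :=
  ∀ n : ℕ, ∃ me ∈ enabledE G (π n),
    G.rel (π n) me (σ.act ((List.range n).map π) (π n) me) (π (n + 1))

/-- `π` is a play consistent with the environment strategy `σ`: at every step `n` there
is a system move `ms` enabled after the environment move chosen by `σ` on the history
`(π 0, …, π n)` such that the corresponding transition leads to `π (n+1)`. -/
def EnvPlay (G : GameStructure S Me Ms) (σ : EnvStrategy G) (π : ℕ → S) : Prop :=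
  ∀ n : ℕ, ∃ ms ∈ enabledS G (π n) (σ.act ((List.range n).map π) (π n)),
    G.rel (π n) (σ.act ((List.range n).map π) (π n)) ms (π (n + 1))

/-- The system attractor of `T`: states from which the system has a strategy forcing
every consistent play to visit `T`. -/
def attrSys (G : GameStructure S Me Ms) (T : Set S) : Set S :=
  {s | ∃ σ : SysStrategy G, ∀ π : ℕ → S, π 0 = s → SysPlay G σ π → ∃ n : ℕ, π n ∈ T}

/-- The environment attractor of `T`: states from which the environment has a strategy
forcing every consistent play to visit `T`. -/
def attrEnv (G : GameStructure S Me Ms) (T : Set S) : Set S :=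
  {s | ∃ σ : EnvStrategy G, ∀ π : ℕ → S, π 0 = s → EnvPlay G σ π → ∃ n : ℕ, π n ∈ T}

/-- The controllable predecessor operator for the system player. -/
def cpreSys (G : GameStructure S Me Ms) (X : Set S) : Set S :=
  {s | ∀ me ∈ enabledE G s, ∃ ms ∈ enabledS G s me, ∀ s' : S, G.rel s me ms s' → s' ∈ X}

/-- The controllable predecessor operator for the environment player. -/
def cpreEnv (G : GameStructure S Me Ms) (X : Set S) : Set S :=
  {s | ∃ me ∈ enabledE G s, ∀ ms ∈ enabledS G s me, ∀ s' : S, G.rel s me ms s' → s' ∈ X}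

/-- A semantic acceleration lemma over a type `A`: a triple `(base, step, conc)` of
subsets such that (i) every infinite `step`-sequence starting in `conc` eventually
reaches `base`, and (ii) `conc \ base` is closed under `step`-successors. -/
def IsAccelLemma {A : Type*} (base : Set A) (step : Set (A × A)) (conc : Set A) : Prop :=
  (∀ α : ℕ → A, α 0 ∈ conc → (∀ i : ℕ, (α i, α (i + 1)) ∈ step) → ∃ k : ℕ, α k ∈ base) ∧
  (∀ a ∈ conc, a ∉ base → ∀ a' : A, (a, a') ∈ step → a' ∈ conc)

/-! Attractor strategies compose: play a strategy reaching `T` and, from the first visit to some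
`t ∈ T` on, a strategy reaching `U` from `t`; hence `T ⊆ Attr_Sys(U)` gives
`Attr_Sys(T) ⊆ Attr_Sys(U)`. The acceleration lemma makes the one-step relation "`s' ∈ step s`,
with `s ∈ conc \ base`" well-founded, and well-founded induction along it shows every state
of `conc` lies in `Attr_Sys(d)`. -/

theorem List.map_range_append_singleton (π : ℕ → S) (n : ℕ) :
    (List.range n).map π ++ [π n] = (List.range (n + 1)).map π := by
  simp [List.range_succ]

theorem List.findIdx_map_range {p : S → Bool} {π : ℕ → S} {m n : ℕ} (hmn : m < n)
    (hm : p (π m)) (hlt : ∀ j < m, p (π j) = false) :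
    ((List.range n).map π).findIdx p = m := by
  rw [List.findIdx_eq (by simpa using hmn)]
  simp only [List.getElem_map, List.getElem_range]
  exact ⟨hm, hlt⟩

theorem List.drop_map_range_add (π : ℕ → S) (m k : ℕ) :
    ((List.range (m + k)).map π).drop m = (List.range k).map fun j => π (m + j) := by
  rw [List.range_add, List.map_append, List.drop_left' (by simp), List.map_map]
  rfl

namespace SysStrategy

variable {G : GameStructure S Me Ms}

instance : Nonempty (SysStrategy G) := by
  classical
  refine ⟨⟨fun _ s me => if h : me ∈ enabledE G s then h.choose
    else (G.exists_succ s).choose_spec.choose, fun _ s me hme => ?_⟩⟩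
  rw [dif_pos hme]
  exact hme.choose_spec

open Classical in
/-- Plays `σ` until the first visit to `T`, say at position `i` in state `t`, and from then on
plays `τ t` as if the play had started at position `i`. -/
noncomputable def switch (σ : SysStrategy G) (T : Set S) (τ : S → SysStrategy G) :
    SysStrategy G where
  act h s me :=
    let i := (h ++ [s]).findIdx (· ∈ T)
    if i < (h ++ [s]).length then (τ ((h ++ [s]).getD i s)).act (h.drop i) s me
    else σ.act h s me
  act_enabled h s me hme := by
    dsimp only
    split_ifs
    exacts [act_enabled _ _ _ _ hme, act_enabled _ _ _ _ hme]

variable {σ : SysStrategy G} {T : Set S} {τ : S → SysStrategy G} {π : ℕ → S}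

theorem switch_act_of_forall_notMem {n : ℕ} (hπ : ∀ j ≤ n, π j ∉ T) (me : Me) :
    (σ.switch T τ).act ((List.range n).map π) (π n) me =
      σ.act ((List.range n).map π) (π n) me := by
  simp only [switch, List.map_range_append_singleton]
  rw [if_neg]
  simp only [List.findIdx_lt_length, List.mem_map, List.mem_range, decide_eq_true_eq]
  rintro ⟨_, ⟨j, hj, rfl⟩, hjT⟩
  exact hπ j (Nat.lt_succ_iff.mp hj) hjT

theorem switch_act_add_of_first_mem {m : ℕ} (hm : π m ∈ T) (hlt : ∀ j < m, π j ∉ T)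
    (k : ℕ) (me : Me) :
    (σ.switch T τ).act ((List.range (m + k)).map π) (π (m + k)) me =
      (τ (π m)).act ((List.range k).map fun j => π (m + j)) (π (m + k)) me := by
  classical
  have hfind : ((List.range (m + k + 1)).map π).findIdx (· ∈ T) = m :=
    List.findIdx_map_range (by omega) (decide_eq_true hm) fun j hj =>
      decide_eq_false (hlt j hj)
  simp only [switch, List.map_range_append_singleton]
  rw [hfind, if_pos (by simp), List.drop_map_range_add]
  simp [show m < m + k + 1 by omega]

end SysStrategy

namespace SysPlay

variable {G : GameStructure S Me Ms} {σ : SysStrategy G} {T : Set S} {τ : S → SysStrategy G}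
  {π : ℕ → S}

theorem of_switch_of_forall_notMem (hπ : SysPlay G (σ.switch T τ) π) (hT : ∀ n, π n ∉ T) :
    SysPlay G σ π := fun n => by
  simpa only [SysStrategy.switch_act_of_forall_notMem fun j _ => hT j] using hπ n

theorem shift_of_switch (hπ : SysPlay G (σ.switch T τ) π) {m : ℕ} (hm : π m ∈ T)
    (hlt : ∀ j < m, π j ∉ T) : SysPlay G (τ (π m)) fun k => π (m + k) := fun k => by
  simpa only [SysStrategy.switch_act_add_of_first_mem hm hlt, ← Nat.add_assoc] using hπ (m + k)

end SysPlay

section Attractor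

variable {G : GameStructure S Me Ms} {T U : Set S}

theorem subset_attrSys : T ⊆ attrSys G T := fun _ hs =>
  ⟨Classical.arbitrary _, fun _ hπ0 _ => ⟨0, hπ0 ▸ hs⟩⟩

theorem attrSys_subset_of_subset_attrSys (hTU : T ⊆ attrSys G U) :
    attrSys G T ⊆ attrSys G U := by
  classical
  rintro s ⟨σ, hσ⟩
  choose! τ hτ using fun t (ht : t ∈ T) => hTU ht
  refine ⟨σ.switch T τ, fun π hπ0 hπ => ?_⟩
  have hvisit : ∃ n, π n ∈ T := by
    by_contra! hT
    obtain ⟨n, hn⟩ := hσ π hπ0 (hπ.of_switch_of_forall_notMem hT)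
    exact hT n hn
  have hm := Nat.find_spec hvisit
  obtain ⟨k, hk⟩ := hτ _ hm (fun k => π (Nat.find hvisit + k)) rfl
    (hπ.shift_of_switch hm fun j hj => Nat.find_min hvisit hj)
  exact ⟨_, hk⟩

end Attractor

theorem IsAccelLemma.wellFounded {A : Type*} {base conc : Set A} {step : Set (A × A)}
    (hlem : IsAccelLemma base step conc) :
    WellFounded fun a' a => a ∈ conc ∧ a ∉ base ∧ (a, a') ∈ step := by
  refine wellFounded_iff_isEmpty_descending_chain.mpr ⟨fun ⟨α, hα⟩ => ?_⟩
  obtain ⟨k, hk⟩ := hlem.1 α (hα 0).1 fun i => (hα i).2.2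
  exact (hα k).2.1 hk

/-- Lemma 6.3 (soundness of attractor acceleration, system player): if
`(base, step, conc)` is a semantic acceleration lemma over the states with
`base ⊆ d`, and from every state `s ∈ conc \ d` the system can enforce reaching
`d` or a `step`-successor of `s`, then `conc ⊆ Attr_Sys(d)`. -/
theorem accel_subset_attrSys (G : GameStructure S Me Ms) (d : Set S)
    (base conc : Set S) (step : Set (S × S))
    (hlem : IsAccelLemma base step conc)
    (hbase : base ⊆ d)
    (hstep : ∀ s ∈ conc, s ∉ d → s ∈ attrSys G (d ∪ {s' : S | (s, s') ∈ step})) :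
    conc ⊆ attrSys G d := by
  intro s hs
  induction s using hlem.wellFounded.induction with
  | _ s ih =>
    by_cases hsd : s ∈ d
    · exact subset_attrSys hsd
    have hsb : s ∉ base := fun hb => hsd (hbase hb)
    refine attrSys_subset_of_subset_attrSys ?_ (hstep s hs hsd)
    rintro t (htd | hst)
    · exact subset_attrSys htd
    · exact ih t ⟨hs, hsb, hst⟩ (hlem.2 s hs hsb t hst)
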